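/- arXiv:2601.21522 — 7 statements merged into one kernel-verified Lean document; each statement's English description precedes it below -/
import Mathlib

section
/- Let p be a random variable on [0,1] with q = 1 - p, and for integer τ ≥ 1 define F(τ) = 1 - E[q^τ] and G(τ) = E[(1 - q^τ)/p]. Then F(τ) G(τ+1) - F(τ+1) G(τ) ≥ 0 for all τ ≥ 1 (assuming p > 0 almost surely so the expectations are well-defined). -/
open MeasureTheory Finset

private lemma core_sum_FG (τ : ℕ) {x y : ℝ} (hx : 0 ≤ x) (hxy : x ≤ y) :
    (∑ k ∈ range τ, y ^ k) * x ^ τ ≤ (∑ k ∈ range τ, x ^ k) * y ^ τ := by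
  rw [Finset.sum_mul, Finset.sum_mul]
  apply Finset.sum_le_sum
  intro k hk
  have hk' : k ≤ τ := (Finset.mem_range.mp hk).le
  have hy : 0 ≤ y := hx.trans hxy
  have hxt : x ^ τ = x ^ k * x ^ (τ - k) := by rw [← pow_add, Nat.add_sub_cancel' hk']
  have hyt : y ^ τ = y ^ k * y ^ (τ - k) := by rw [← pow_add, Nat.add_sub_cancel' hk']
  rw [hxt, hyt]
  have : x ^ (τ - k) ≤ y ^ (τ - k) := pow_le_pow_left₀ hx hxy _
  calc y ^ k * (x ^ k * x ^ (τ - k)) = (x ^ k * y ^ k) * x ^ (τ - k) := by ring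
    _ ≤ (x ^ k * y ^ k) * y ^ (τ - k) :=
        mul_le_mul_of_nonneg_left this (mul_nonneg (pow_nonneg hx _) (pow_nonneg hy _))
    _ = x ^ k * (y ^ k * y ^ (τ - k)) := by ring

private lemma core_signed_FG (τ : ℕ) {x y : ℝ} (hx : 0 ≤ x) (hx1 : x ≤ 1) (hy : 0 ≤ y)
    (hy1 : y ≤ 1) :
    0 ≤ (y - x) * ((1 - x ^ τ) * y ^ τ * (1 - y) - (1 - y ^ τ) * x ^ τ * (1 - x)) := by
  have hgx : (1:ℝ) - x ^ τ = (1 - x) * ∑ k ∈ range τ, x ^ k := by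
    have := geom_sum_mul x τ; nlinarith [this]
  have hgy : (1:ℝ) - y ^ τ = (1 - y) * ∑ k ∈ range τ, y ^ k := by
    have := geom_sum_mul y τ; nlinarith [this]
  rw [hgx, hgy]
  rcases le_total x y with h | h
  · have key : 0 ≤ ((y - x) * (1 - x) * (1 - y)) *
        ((∑ k ∈ range τ, x ^ k) * y ^ τ - (∑ k ∈ range τ, y ^ k) * x ^ τ) :=
      mul_nonneg (mul_nonneg (mul_nonneg (by linarith) (by linarith)) (by linarith))
        (sub_nonneg.mpr (core_sum_FG τ hx h))
    nlinarith [key]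
  · have key : 0 ≤ ((x - y) * (1 - x) * (1 - y)) *
        ((∑ k ∈ range τ, y ^ k) * x ^ τ - (∑ k ∈ range τ, x ^ k) * y ^ τ) :=
      mul_nonneg (mul_nonneg (mul_nonneg (by linarith) (by linarith)) (by linarith))
        (sub_nonneg.mpr (core_sum_FG τ hy h))
    nlinarith [key]

private lemma ptwise_FG (τ : ℕ) {a b : ℝ} (ha : 0 < a) (ha1 : a ≤ 1) (hb : 0 < b)
    (hb1 : b ≤ 1) :
    (1 - (1-a)^(τ+1)) * ((1 - (1-b)^τ)/b) + (1 - (1-b)^(τ+1)) * ((1 - (1-a)^τ)/a)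
      ≤ (1 - (1-a)^τ) * ((1 - (1-b)^(τ+1))/b) + (1 - (1-b)^τ) * ((1 - (1-a)^(τ+1))/a) := by
  have key := core_signed_FG τ (x := 1-a) (y := 1-b) (by linarith) (by linarith) (by linarith)
    (by linarith)
  have hab : 0 < a * b := mul_pos ha hb
  have hdiv : 0 ≤ ((1-b) - (1-a)) * ((1 - (1-a) ^ τ) * (1-b) ^ τ * (1 - (1-b)) -
      (1 - (1-b) ^ τ) * (1-a) ^ τ * (1 - (1-a))) / (a * b) := div_nonneg key hab.le
  have hid : ((1-b) - (1-a)) * ((1 - (1-a) ^ τ) * (1-b) ^ τ * (1 - (1-b)) -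
      (1 - (1-b) ^ τ) * (1-a) ^ τ * (1 - (1-a))) / (a * b)
      = ((1 - (1-a)^τ) * ((1 - (1-b)^(τ+1))/b) + (1 - (1-b)^τ) * ((1 - (1-a)^(τ+1))/a))
      - ((1 - (1-a)^(τ+1)) * ((1 - (1-b)^τ)/b) + (1 - (1-b)^(τ+1)) * ((1 - (1-a)^τ)/a)) := by
    field_simp
    ring
  linarith [hid ▸ hdiv]

/-- Let `p` be a random variable with values in `(0,1]` almost surely, `q = 1 - p`,
and for `τ ≥ 1` let `F τ = 1 - E[q^τ]` and `G τ = E[(1 - q^τ)/p]`.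
Then `F τ * G (τ+1) - F (τ+1) * G τ ≥ 0` for all `τ ≥ 1`. -/
theorem F_G_numerator_nonneg
    {Ω : Type*} [MeasurableSpace Ω] (μ : Measure Ω) [IsProbabilityMeasure μ]
    (p : Ω → ℝ) (hp : Measurable p)
    (hp01 : ∀ᵐ ω ∂μ, 0 < p ω ∧ p ω ≤ 1)
    (F G : ℕ → ℝ)
    (hF : ∀ τ : ℕ, F τ = 1 - ∫ ω, (1 - p ω) ^ τ ∂μ)
    (hG : ∀ τ : ℕ, G τ = ∫ ω, (1 - (1 - p ω) ^ τ) / p ω ∂μ)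
    (τ : ℕ) (hτ : 1 ≤ τ) :
    0 ≤ F τ * G (τ + 1) - F (τ + 1) * G τ := by
  -- the four integrands
  set f : Ω → ℝ := fun ω => 1 - (1 - p ω) ^ τ with hf_def
  set f' : Ω → ℝ := fun ω => 1 - (1 - p ω) ^ (τ+1) with hf'_def
  set g : Ω → ℝ := fun ω => (1 - (1 - p ω) ^ (τ+1)) / p ω with hg_def
  set g' : Ω → ℝ := fun ω => (1 - (1 - p ω) ^ τ) / p ω with hg'_def
  -- measurability
  have hmeasq : Measurable fun ω => 1 - p ω := measurable_const.sub hp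
  have hmeasf : ∀ n : ℕ, Measurable fun ω => 1 - (1 - p ω) ^ n := fun n =>
    measurable_const.sub (hmeasq.pow_const n)
  have hmeasg : ∀ n : ℕ, Measurable fun ω => (1 - (1 - p ω) ^ n) / p ω := fun n =>
    (hmeasf n).div hp
  -- integrability
  have hintf : ∀ n : ℕ, Integrable (fun ω => 1 - (1 - p ω) ^ n) μ := by
    intro n
    refine (integrable_const (1:ℝ)).mono' (hmeasf n).aestronglyMeasurable ?_
    filter_upwards [hp01] with ω ⟨h0, h1⟩
    have hx0 : (0:ℝ) ≤ 1 - p ω := by linarith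
    have hx1 : (1:ℝ) - p ω ≤ 1 := by linarith
    have h1 : (1 - p ω) ^ n ≤ 1 := pow_le_one₀ hx0 hx1
    have h2 : 0 ≤ (1 - p ω) ^ n := pow_nonneg hx0 n
    rw [Real.norm_eq_abs, abs_of_nonneg (by linarith)]
    linarith
  have hintg : ∀ n : ℕ, Integrable (fun ω => (1 - (1 - p ω) ^ n) / p ω) μ := by
    intro n
    refine (integrable_const (n:ℝ)).mono' (hmeasg n).aestronglyMeasurable ?_
    filter_upwards [hp01] with ω ⟨h0, h1⟩
    have hx0 : (0:ℝ) ≤ 1 - p ω := by linarith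
    have hx1 : (1:ℝ) - p ω ≤ 1 := by linarith
    have h1 : (1 - p ω) ^ n ≤ 1 := pow_le_one₀ hx0 hx1
    have h2 : 0 ≤ (1 - p ω) ^ n := pow_nonneg hx0 n
    -- Bernoulli: 1 + n * ((1 - p ω) - 1) ≤ (1 - p ω)^n
    have hbern : 1 + (n:ℝ) * (-(p ω)) ≤ (1 - p ω) ^ n := by
      have := one_add_mul_le_pow (a := -(p ω)) (by linarith) n
      simpa [sub_eq_add_neg, add_comm] using this
    rw [Real.norm_eq_abs, abs_of_nonneg (div_nonneg (by linarith) h0.le)]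
    rw [div_le_iff₀ h0]
    nlinarith
  have hintpow : ∀ n : ℕ, Integrable (fun ω => (1 - p ω) ^ n) μ := by
    intro n
    have : (fun ω => (1 - p ω) ^ n) = (fun ω => (1:ℝ)) - fun ω => 1 - (1 - p ω) ^ n := by
      funext ω; simp
    rw [this]
    exact (integrable_const 1).sub (hintf n)
  -- F as an integral
  have hFn : ∀ n : ℕ, F n = ∫ ω, (1 - (1 - p ω) ^ n) ∂μ := by
    intro n
    rw [hF n, integral_sub (integrable_const 1) (hintpow n), integral_const]
    simp
  -- the symmetrized pointwise inequality, a.e. on the product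
  have hfst := (Measure.quasiMeasurePreserving_fst (μ := μ) (ν := μ)).ae hp01
  have hsnd := (Measure.quasiMeasurePreserving_snd (μ := μ) (ν := μ)).ae hp01
  have hae : ∀ᵐ z ∂(μ.prod μ), 0 ≤ f z.1 * g z.2 + g z.1 * f z.2
      - f' z.1 * g' z.2 - g' z.1 * f' z.2 := by
    filter_upwards [hfst, hsnd] with z ⟨ha0, ha1⟩ ⟨hb0, hb1⟩
    have h := ptwise_FG τ (a := p z.1) (b := p z.2) ha0 ha1 hb0 hb1
    simp only [hf_def, hf'_def, hg_def, hg'_def]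
    ring_nf at h ⊢
    linarith
  -- integrability of the four product terms
  have I1 : Integrable (fun z : Ω × Ω => f z.1 * g z.2) (μ.prod μ) :=
    (hintf τ).mul_prod (hintg (τ+1))
  have I2 : Integrable (fun z : Ω × Ω => g z.1 * f z.2) (μ.prod μ) :=
    (hintg (τ+1)).mul_prod (hintf τ)
  have I3 : Integrable (fun z : Ω × Ω => f' z.1 * g' z.2) (μ.prod μ) :=
    (hintf (τ+1)).mul_prod (hintg τ)
  have I4 : Integrable (fun z : Ω × Ω => g' z.1 * f' z.2) (μ.prod μ) :=
    (hintg τ).mul_prod (hintf (τ+1))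
  have I12 : Integrable (fun z : Ω × Ω => f z.1 * g z.2 + g z.1 * f z.2) (μ.prod μ) :=
    I1.add I2
  have I123 : Integrable (fun z : Ω × Ω =>
      f z.1 * g z.2 + g z.1 * f z.2 - f' z.1 * g' z.2) (μ.prod μ) := I12.sub I3
  -- integrate
  have hIge : 0 ≤ ∫ z, (f z.1 * g z.2 + g z.1 * f z.2
      - f' z.1 * g' z.2 - g' z.1 * f' z.2) ∂(μ.prod μ) := integral_nonneg_of_ae hae
  have hsplit : ∫ z, (f z.1 * g z.2 + g z.1 * f z.2
      - f' z.1 * g' z.2 - g' z.1 * f' z.2) ∂(μ.prod μ)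
      = 2 * ((∫ ω, f ω ∂μ) * (∫ ω, g ω ∂μ)) - 2 * ((∫ ω, f' ω ∂μ) * (∫ ω, g' ω ∂μ)) := by
    rw [integral_sub I123 I4, integral_sub I12 I3, integral_add I1 I2,
      integral_prod_mul, integral_prod_mul, integral_prod_mul, integral_prod_mul]
    ring
  have hFτ : F τ = ∫ ω, f ω ∂μ := hFn τ
  have hFτ1 : F (τ+1) = ∫ ω, f' ω ∂μ := hFn (τ+1)
  have hGτ : G τ = ∫ ω, g' ω ∂μ := hG τ
  have hGτ1 : G (τ+1) = ∫ ω, g ω ∂μ := hG (τ+1)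
  rw [hsplit] at hIge
  rw [hFτ, hFτ1, hGτ, hGτ1]
  linarith
end

section
/- Under the same setup, the mean completion time under resetting, E[T_τ] = G(τ)/F(τ), is nondecreasing in τ: for every τ ≥ 1, E[T_τ] ≤ E[T_{τ+1}]. Consequently τ = 1 minimizes E[T_τ] over all positive integers τ. -/
open MeasureTheory

/-- The mean completion time under resetting, `E[T_τ] = G τ / F τ`, is nondecreasing
in `τ`; consequently `τ = 1` minimizes `E[T_τ]` over all positive integers. -/
theorem reset_mean_monotone_and_tau_one_optimal
    {Ω : Type*} [MeasurableSpace Ω] (μ : Measure Ω) [IsProbabilityMeasure μ]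
    (p : Ω → ℝ) (hp : Measurable p)
    (hp01 : ∀ᵐ ω ∂μ, 0 < p ω ∧ p ω ≤ 1)
    (F G : ℕ → ℝ)
    (hF : ∀ τ : ℕ, F τ = 1 - ∫ ω, (1 - p ω) ^ τ ∂μ)
    (hG : ∀ τ : ℕ, G τ = ∫ ω, (1 - (1 - p ω) ^ τ) / p ω ∂μ) :
    ∀ τ : ℕ, 1 ≤ τ → G τ / F τ ≤ G (τ + 1) / F (τ + 1) ∧ G 1 / F 1 ≤ G τ / F τ := by
  have hqm : Measurable fun ω => 1 - p ω := measurable_const.sub hp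
  set m : ℕ → ℝ := fun k => ∫ ω, (1 - p ω) ^ k ∂μ with hm
  have hq01 : ∀ᵐ ω ∂μ, 0 ≤ 1 - p ω ∧ 1 - p ω < 1 := by
    filter_upwards [hp01] with ω h
    constructor <;> [linarith [h.2]; linarith [h.1]]
  -- integrability of powers
  have hint : ∀ k : ℕ, Integrable (fun ω => (1 - p ω) ^ k) μ := by
    intro k
    refine Integrable.mono' (integrable_const (1 : ℝ))
      ((hqm.pow_const k).aestronglyMeasurable) ?_
    filter_upwards [hq01] with ω h
    rw [Real.norm_eq_abs, abs_of_nonneg (pow_nonneg h.1 k)]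
    exact pow_le_one₀ h.1 h.2.le
  have hm0 : m 0 = 1 := by simp [hm]
  have hmnn : ∀ k, 0 ≤ m k := by
    intro k
    exact integral_nonneg_of_ae (hq01.mono fun ω h => pow_nonneg h.1 k)
  have hmono : ∀ a b : ℕ, a ≤ b → m b ≤ m a := by
    intro a b hab
    refine integral_mono_ae (hint b) (hint a) ?_
    filter_upwards [hq01] with ω h
    exact pow_le_pow_of_le_one h.1 h.2.le hab
  -- F in terms of moments, positivity
  have hF' : ∀ τ, F τ = 1 - m τ := fun τ => hF τ
  have hFpos : ∀ τ : ℕ, 1 ≤ τ → 0 < F τ := by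
    intro τ hτ
    rw [hF']
    have h1 : (1 : ℝ) - m τ = ∫ ω, (1 - (1 - p ω) ^ τ) ∂μ := by
      rw [integral_sub (integrable_const 1) (hint τ)]
      simp [hm]
    rw [h1]
    have hposae : ∀ᵐ ω ∂μ, 0 < 1 - (1 - p ω) ^ τ := by
      filter_upwards [hq01] with ω h
      have : (1 - p ω) ^ τ < 1 := pow_lt_one₀ h.1 h.2 (by omega)
      linarith
    have hnn : 0 ≤ᵐ[μ] fun ω => 1 - (1 - p ω) ^ τ :=
      hposae.mono fun ω h => h.le
    have hi : Integrable (fun ω => 1 - (1 - p ω) ^ τ) μ :=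
      (integrable_const 1).sub (hint τ)
    refine (integral_pos_iff_support_of_nonneg_ae hnn hi).mpr ?_
    rw [pos_iff_ne_zero]
    intro h0
    have hc : μ (Function.support fun ω => 1 - (1 - p ω) ^ τ)ᶜ = 0 := by
      apply measure_mono_null _ (ae_iff.mp hposae)
      intro ω hω
      simp only [Function.mem_support, Set.mem_compl_iff, not_not] at hω
      simp only [Set.mem_setOf_eq, not_lt]
      linarith
    have hle := measure_union_le (μ := μ)
      (Function.support fun ω => 1 - (1 - p ω) ^ τ)
      (Function.support fun ω => 1 - (1 - p ω) ^ τ)ᶜ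
    rw [Set.union_compl_self, h0, hc, measure_univ] at hle
    simp at hle
  -- G in terms of moments
  have hG' : ∀ τ : ℕ, G τ = ∑ k ∈ Finset.range τ, m k := by
    intro τ
    rw [hG, ← integral_finset_sum _ fun k _ => hint k]
    refine integral_congr_ae ?_
    filter_upwards [hp01] with ω h
    have hne : (1 : ℝ) - p ω ≠ 1 := by
      intro hcontra
      have : p ω = 0 := by linarith
      linarith [h.1]
    rw [geom_sum_eq hne]
    rw [show (1 : ℝ) - p ω - 1 = -(p ω) by ring, div_neg, ← neg_div, neg_sub]
  -- Cauchy–Schwarz: log-convexity of moments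
  have hlc : ∀ j : ℕ, m (j + 1) ^ 2 ≤ m j * m (j + 2) := by
    intro j
    have hpq : (2 : ℝ).HolderConjugate 2 := Real.holderConjugate_iff.mpr ⟨by norm_num, by norm_num⟩
    set f : Ω → ℝ := fun ω => Real.sqrt ((1 - p ω) ^ j) with hf
    set g : Ω → ℝ := fun ω => Real.sqrt ((1 - p ω) ^ (j + 2)) with hgdef
    have hmemf : MemLp f (ENNReal.ofReal 2) μ := by
      refine MemLp.of_bound ((hqm.pow_const j).sqrt.aestronglyMeasurable) 1 ?_
      filter_upwards [hq01] with ω h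
      rw [Real.norm_eq_abs, abs_of_nonneg (Real.sqrt_nonneg _)]
      have := Real.sqrt_le_sqrt (pow_le_one₀ h.1 h.2.le) (x := (1 - p ω) ^ j)
      simpa using this
    have hmemg : MemLp g (ENNReal.ofReal 2) μ := by
      refine MemLp.of_bound ((hqm.pow_const (j + 2)).sqrt.aestronglyMeasurable) 1 ?_
      filter_upwards [hq01] with ω h
      rw [Real.norm_eq_abs, abs_of_nonneg (Real.sqrt_nonneg _)]
      have := Real.sqrt_le_sqrt (pow_le_one₀ h.1 h.2.le) (x := (1 - p ω) ^ (j + 2))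
      simpa using this
    have hfnn : 0 ≤ᵐ[μ] f := Filter.Eventually.of_forall fun ω => Real.sqrt_nonneg _
    have hgnn : 0 ≤ᵐ[μ] g := Filter.Eventually.of_forall fun ω => Real.sqrt_nonneg _
    have hCS := integral_mul_le_Lp_mul_Lq_of_nonneg hpq hfnn hgnn hmemf hmemg
    have hfg : ∫ ω, f ω * g ω ∂μ = m (j + 1) := by
      refine integral_congr_ae ?_
      filter_upwards [hq01] with ω h
      rw [hf, hgdef]
      rw [← Real.sqrt_mul (pow_nonneg h.1 j), ← pow_add]
      rw [show j + (j + 2) = (j + 1) * 2 by ring, pow_mul, Real.sqrt_sq (pow_nonneg h.1 _)]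
    have hf2 : ∫ ω, f ω ^ (2 : ℝ) ∂μ = m j := by
      refine integral_congr_ae ?_
      filter_upwards [hq01] with ω h
      rw [hf, show (2 : ℝ) = ((2 : ℕ) : ℝ) by norm_num, Real.rpow_natCast,
        Real.sq_sqrt (pow_nonneg h.1 j)]
    have hg2 : ∫ ω, g ω ^ (2 : ℝ) ∂μ = m (j + 2) := by
      refine integral_congr_ae ?_
      filter_upwards [hq01] with ω h
      rw [hgdef, show (2 : ℝ) = ((2 : ℕ) : ℝ) by norm_num, Real.rpow_natCast,
        Real.sq_sqrt (pow_nonneg h.1 (j + 2))]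
    rw [hfg, hf2, hg2] at hCS
    calc m (j + 1) ^ 2 ≤ (m j ^ ((1 : ℝ) / 2) * m (j + 2) ^ ((1 : ℝ) / 2)) ^ 2 :=
          pow_le_pow_left₀ (hmnn _) hCS 2
      _ = m j * m (j + 2) := by
          rw [← Real.sqrt_eq_rpow, ← Real.sqrt_eq_rpow, mul_pow,
            Real.sq_sqrt (hmnn j), Real.sq_sqrt (hmnn (j + 2))]
  -- key inequality: m (k+1) * m (k+d) ≤ m k * m (k+d+1)
  have hkey : ∀ d k : ℕ, m (k + 1) * m (k + d) ≤ m k * m (k + d + 1) := by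
    intro d
    induction d with
    | zero => intro k; simp [mul_comm]
    | succ d ih =>
      intro k
      by_cases hz : m (k + 1) = 0
      · have h1 : m (k + (d + 1)) ≤ m (k + 1) := hmono _ _ (by omega)
        have h2 : m (k + (d + 1)) = 0 := le_antisymm (by linarith [hz ▸ h1]) (hmnn _)
        rw [hz]
        simpa using mul_nonneg (hmnn k) (hmnn (k + (d + 1) + 1))
      · have hpos : 0 < m (k + 1) := lt_of_le_of_ne (hmnn _) (Ne.symm hz)
        have h1 := ih (k + 1)
        have e1 : k + 1 + d = k + (d + 1) := by omega
        rw [e1] at h1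
        have e2 : k + 1 + 1 = k + 2 := by omega
        rw [e2] at h1
        have h2 := hlc k
        nlinarith [mul_le_mul_of_nonneg_right h2 (hmnn (k + (d + 1))),
          mul_le_mul_of_nonneg_left h1 (hmnn k), hmnn (k + (d + 1) + 1), hmnn k]
  -- one-step monotonicity
  have hstep : ∀ τ : ℕ, 1 ≤ τ → G τ / F τ ≤ G (τ + 1) / F (τ + 1) := by
    intro τ hτ
    rw [div_le_div_iff₀ (hFpos τ hτ) (hFpos (τ + 1) (by omega))]
    have hGrec : G (τ + 1) = G τ + m τ := by
      rw [hG', hG', Finset.sum_range_succ]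
    have main : G τ * (m τ - m (τ + 1)) ≤ (1 - m τ) * m τ := by
      have htel : (1 : ℝ) - m τ = ∑ k ∈ Finset.range τ, (m k - m (k + 1)) := by
        rw [Finset.sum_range_sub' m, hm0]
      rw [htel, hG', Finset.sum_mul, Finset.sum_mul]
      refine Finset.sum_le_sum fun k hk => ?_
      have hkτ : k < τ := Finset.mem_range.mp hk
      have h := hkey (τ - k) k
      have e1 : k + (τ - k) = τ := by omega
      rw [e1] at h
      nlinarith [h]
    rw [hGrec, hF' τ, hF' (τ + 1)]
    nlinarith [main]
  intro τ hτ
  refine ⟨hstep τ hτ, ?_⟩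
  induction τ with
  | zero => omega
  | succ n ih =>
    rcases Nat.lt_or_ge 1 (n + 1) with h | h
    · have hn : 1 ≤ n := by omega
      exact le_trans (ih hn) (hstep n hn)
    · have : n = 0 := by omega
      subst this
      exact le_refl _
end

section
/- For any random variable p ∈ (0,1] and any positive integer τ, E[T_τ] = G(τ)/F(τ) ≤ E[1/p], i.e., resetting never increases the mean number of attempts compared to solve-to-completion whose mean is E[T] = E[1/p]; moreover lim_{τ→∞} G(τ)/F(τ) = E[1/p] (the limit may be +∞). -/
open MeasureTheory Filter Topology

section aux

variable {Ω : Type*} [MeasurableSpace Ω] (μ : Measure Ω) [IsProbabilityMeasure μ]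

/-- Chebyshev's integral (correlation) inequality for anti-monotone pairs. -/
lemma chebyshev_anti {f g : Ω → ℝ} (hf : Integrable f μ) (hg : Integrable g μ)
    (hfg : Integrable (fun ω => f ω * g ω) μ)
    (h : ∀ᵐ z ∂(μ.prod μ), (f z.1 - f z.2) * (g z.1 - g z.2) ≤ 0) :
    ∫ ω, f ω * g ω ∂μ ≤ (∫ ω, f ω ∂μ) * ∫ ω, g ω ∂μ := by
  have i11 : Integrable (fun z : Ω × Ω => f z.1 * g z.1) (μ.prod μ) := by
    have := hfg.mul_prod (integrable_const (1 : ℝ)) (ν := μ)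
    simpa using this
  have i22 : Integrable (fun z : Ω × Ω => f z.2 * g z.2) (μ.prod μ) := by
    have := (integrable_const (1 : ℝ)).mul_prod hfg (μ := μ)
    simpa using this
  have i12 : Integrable (fun z : Ω × Ω => f z.1 * g z.2) (μ.prod μ) := hf.mul_prod hg
  have i21 : Integrable (fun z : Ω × Ω => f z.2 * g z.1) (μ.prod μ) := by
    have := hg.mul_prod hf
    simpa [mul_comm] using this
  have key : ∫ z, (f z.1 - f z.2) * (g z.1 - g z.2) ∂(μ.prod μ) ≤ 0 :=
    integral_nonpos_of_ae h
  have expand : (fun z : Ω × Ω => (f z.1 - f z.2) * (g z.1 - g z.2))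
      = fun z => (f z.1 * g z.1 + f z.2 * g z.2) - (f z.1 * g z.2 + f z.2 * g z.1) := by
    funext z; ring
  have iA : Integrable (fun z : Ω × Ω => f z.1 * g z.1 + f z.2 * g z.2) (μ.prod μ) :=
    i11.add i22
  have iB : Integrable (fun z : Ω × Ω => f z.1 * g z.2 + f z.2 * g z.1) (μ.prod μ) :=
    i12.add i21
  rw [expand, integral_sub iA iB, integral_add i11 i22, integral_add i12 i21] at key
  have e11 : ∫ z : Ω × Ω, f z.1 * g z.1 ∂(μ.prod μ) = ∫ ω, f ω * g ω ∂μ := by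
    have := integral_prod_mul (μ := μ) (ν := μ) (fun ω => f ω * g ω) (fun _ => (1 : ℝ))
    simpa using this
  have e22 : ∫ z : Ω × Ω, f z.2 * g z.2 ∂(μ.prod μ) = ∫ ω, f ω * g ω ∂μ := by
    have := integral_prod_mul (μ := μ) (ν := μ) (fun _ => (1 : ℝ)) (fun ω => f ω * g ω)
    simpa using this
  have e12 : ∫ z : Ω × Ω, f z.1 * g z.2 ∂(μ.prod μ) = (∫ ω, f ω ∂μ) * ∫ ω, g ω ∂μ :=
    integral_prod_mul f g
  have e21 : ∫ z : Ω × Ω, f z.2 * g z.1 ∂(μ.prod μ) = (∫ ω, f ω ∂μ) * ∫ ω, g ω ∂μ := by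
    have := integral_prod_mul (μ := μ) (ν := μ) g f
    rw [show (fun z : Ω × Ω => f z.2 * g z.1) = fun z => g z.1 * f z.2 by funext z; ring]
    rw [this]; ring
  rw [e11, e22, e12, e21] at key
  linarith

end aux

/-- For any random variable `p ∈ (0,1]` and any positive integer `τ`,
`E[T_τ] = G τ / F τ ≤ E[1/p]`, i.e. resetting never increases the mean number of
attempts compared to solve-to-completion whose mean is `E[T] = E[1/p]`; moreover
`G τ / F τ → E[1/p]` as `τ → ∞` (the limit may be `+∞`, so means are taken in
`ℝ≥0∞` via `lintegral`). -/
theorem reset_mean_le_solve_to_completion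
    {Ω : Type*} [MeasurableSpace Ω] (μ : Measure Ω) [IsProbabilityMeasure μ]
    (p : Ω → ℝ) (hp : Measurable p)
    (hp01 : ∀ᵐ ω ∂μ, 0 < p ω ∧ p ω ≤ 1)
    (F G : ℕ → ℝ)
    (hF : ∀ τ : ℕ, F τ = 1 - ∫ ω, (1 - p ω) ^ τ ∂μ)
    (hG : ∀ τ : ℕ, G τ = ∫ ω, (1 - (1 - p ω) ^ τ) / p ω ∂μ) :
    (∀ τ : ℕ, 1 ≤ τ → ENNReal.ofReal (G τ / F τ) ≤ ∫⁻ ω, ENNReal.ofReal (1 / p ω) ∂μ) ∧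
      Filter.Tendsto (fun τ : ℕ => ENNReal.ofReal (G τ / F τ)) Filter.atTop
        (nhds (∫⁻ ω, ENNReal.ofReal (1 / p ω) ∂μ)) := by
  -- measurability facts
  have mpow : ∀ τ : ℕ, Measurable fun ω => (1 - p ω) ^ τ := fun τ =>
    (measurable_const.sub hp).pow_const τ
  have mf : ∀ τ : ℕ, Measurable fun ω => 1 - (1 - p ω) ^ τ := fun τ =>
    measurable_const.sub (mpow τ)
  have mfg : ∀ τ : ℕ, Measurable fun ω => (1 - (1 - p ω) ^ τ) / p ω := fun τ =>
    (mf τ).div hp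
  -- integrability of (1-p)^τ
  have intpow : ∀ τ : ℕ, Integrable (fun ω => (1 - p ω) ^ τ) μ := by
    intro τ
    refine ⟨(mpow τ).aestronglyMeasurable, HasFiniteIntegral.of_bounded (C := 1) ?_⟩
    filter_upwards [hp01] with ω ⟨h0, h1⟩
    rw [Real.norm_eq_abs, abs_of_nonneg (pow_nonneg (by linarith) τ)]
    exact pow_le_one₀ (by linarith) (by linarith)
  have intp : Integrable p μ := by
    have h := (integrable_const (1 : ℝ)).sub (intpow 1)
    exact h.congr (ae_of_all _ fun ω => by simp)
  -- pointwise bound: (1-(1-p)^τ)/p ∈ [0, τ]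
  have hfg_bounds : ∀ τ : ℕ, ∀ ω, 0 < p ω → p ω ≤ 1 →
      0 ≤ (1 - (1 - p ω) ^ τ) / p ω ∧ (1 - (1 - p ω) ^ τ) / p ω ≤ τ := by
    intro τ ω h0 h1
    have h1p : (0:ℝ) ≤ 1 - p ω := by linarith
    have hle1 : (1 - p ω) ^ τ ≤ 1 := pow_le_one₀ h1p (by linarith)
    have hbern : 1 - τ * p ω ≤ (1 - p ω) ^ τ := by
      have := one_add_mul_le_pow (a := -p ω) (by linarith) τ
      simpa [mul_comm, sub_eq_add_neg, mul_neg] using this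
    constructor
    · exact div_nonneg (by linarith) h0.le
    · rw [div_le_iff₀ h0]; nlinarith
  have intfg : ∀ τ : ℕ, Integrable (fun ω => (1 - (1 - p ω) ^ τ) / p ω) μ := by
    intro τ
    refine ⟨(mfg τ).aestronglyMeasurable, HasFiniteIntegral.of_bounded (C := τ) ?_⟩
    filter_upwards [hp01] with ω ⟨h0, h1⟩
    obtain ⟨hb0, hb1⟩ := hfg_bounds τ ω h0 h1
    rw [Real.norm_eq_abs, abs_of_nonneg hb0]
    exact hb1
  -- positivity of ∫ p
  have hIp : 0 < ∫ ω, p ω ∂μ := by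
    rcases lt_or_ge 0 (∫ ω, p ω ∂μ) with h | h
    · exact h
    · exfalso
      have hnn : 0 ≤ᵐ[μ] p := by filter_upwards [hp01] with ω hω; exact hω.1.le
      have h0 : ∫ ω, p ω ∂μ = 0 := le_antisymm h (integral_nonneg_of_ae hnn)
      have := (integral_eq_zero_iff_of_nonneg_ae hnn intp).mp h0
      have hfalse : ∀ᵐ ω ∂μ, False := by
        filter_upwards [hp01, this] with ω hω h2
        exact absurd h2 (ne_of_gt hω.1)
      have : Filter.NeBot (ae μ) := ae_neBot.2 (IsProbabilityMeasure.ne_zero μ)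
      obtain ⟨ω, hω⟩ := hfalse.exists
      exact hω
  -- F τ = ∫ (1 - (1-p)^τ)
  have hFeq : ∀ τ : ℕ, F τ = ∫ ω, (1 - (1 - p ω) ^ τ) ∂μ := by
    intro τ
    have h := integral_sub (integrable_const (1:ℝ)) (intpow τ)
    rw [hF τ]
    rw [show (∫ ω, (1 - (1 - p ω) ^ τ) ∂μ) = ∫ ω, ((1:ℝ) - (1 - p ω) ^ τ) ∂μ from rfl, h]
    simp
  have hFpos : ∀ τ : ℕ, 1 ≤ τ → 0 < F τ := by
    intro τ hτ
    have hmono : ∫ ω, (1 - p ω) ^ τ ∂μ ≤ ∫ ω, (1 - p ω) ∂μ := by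
      refine integral_mono_ae (intpow τ) ?_ ?_
      · have h := (integrable_const (1 : ℝ)).sub intp
        exact h.congr (ae_of_all _ fun ω => rfl)
      · filter_upwards [hp01] with ω hω
        obtain ⟨h0, h1⟩ := hω
        calc (1 - p ω) ^ τ ≤ (1 - p ω) ^ 1 :=
              pow_le_pow_of_le_one (by linarith) (by linarith) hτ
          _ = 1 - p ω := pow_one _
    have h1p : ∫ ω, (1 - p ω) ∂μ = 1 - ∫ ω, p ω ∂μ := by
      rw [integral_sub (integrable_const 1) intp]; simp
    rw [hF τ]; rw [h1p] at hmono; linarith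
  -- a.e. membership on the product
  have hA : MeasurableSet {ω | 0 < p ω ∧ p ω ≤ 1} :=
    (measurableSet_lt measurable_const hp).inter (measurableSet_le hp measurable_const)
  have hprodae : ∀ᵐ z ∂(μ.prod μ),
      (0 < p z.1 ∧ p z.1 ≤ 1) ∧ (0 < p z.2 ∧ p z.2 ≤ 1) := by
    have h : ∀ᵐ z ∂(μ.prod μ),
        z ∈ ({ω | 0 < p ω ∧ p ω ≤ 1} ×ˢ {ω | 0 < p ω ∧ p ω ≤ 1} : Set (Ω × Ω)) := by
      rw [Measure.ae_prod_mem_iff_ae_ae_mem (hA.prod hA)]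
      filter_upwards [hp01] with x hx
      filter_upwards [hp01] with y hy
      exact ⟨hx, hy⟩
    filter_upwards [h] with z hz
    exact hz
  -- Chebyshev-based bound
  have hcheb : ∀ τ : ℕ, Integrable (fun ω => 1 / p ω) μ →
      G τ ≤ F τ * ∫ ω, 1 / p ω ∂μ := by
    intro τ hg
    have hf : Integrable (fun ω => 1 - (1 - p ω) ^ τ) μ :=
      ((integrable_const (1:ℝ)).sub (intpow τ)).congr (ae_of_all _ fun ω => rfl)
    have hfg' : Integrable (fun ω => (1 - (1 - p ω) ^ τ) * (1 / p ω)) μ :=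
      (intfg τ).congr (ae_of_all _ fun ω => (mul_one_div _ _).symm)
    have hmono : ∀ᵐ z ∂(μ.prod μ),
        ((1 - (1 - p z.1) ^ τ) - (1 - (1 - p z.2) ^ τ)) * (1 / p z.1 - 1 / p z.2) ≤ 0 := by
      filter_upwards [hprodae] with z hz
      obtain ⟨⟨hx0, hx1⟩, hy0, hy1⟩ := hz
      rcases le_total (p z.1) (p z.2) with h | h
      · have hfle : (1 - p z.2) ^ τ ≤ (1 - p z.1) ^ τ :=
          pow_le_pow_left₀ (by linarith) (by linarith) τ
        have hgle : 1 / p z.2 ≤ 1 / p z.1 := one_div_le_one_div_of_le hx0 h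
        exact mul_nonpos_of_nonpos_of_nonneg (by linarith) (by linarith)
      · have hfle : (1 - p z.1) ^ τ ≤ (1 - p z.2) ^ τ :=
          pow_le_pow_left₀ (by linarith) (by linarith) τ
        have hgle : 1 / p z.1 ≤ 1 / p z.2 := one_div_le_one_div_of_le hy0 h
        exact mul_nonpos_of_nonneg_of_nonpos (by linarith) (by linarith)
    have h := chebyshev_anti μ hf hg hfg' hmono
    have e1 : ∫ ω, (1 - (1 - p ω) ^ τ) * (1 / p ω) ∂μ = G τ := by
      rw [hG τ]; congr 1; funext ω; rw [mul_one_div]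
    rw [e1, ← hFeq τ] at h
    exact h
  have hnn : 0 ≤ᵐ[μ] fun ω => 1 / p ω := by
    filter_upwards [hp01] with ω hω
    exact div_nonneg zero_le_one hω.1.le
  constructor
  · -- the bound
    intro τ hτ
    by_cases htop : (∫⁻ ω, ENNReal.ofReal (1 / p ω) ∂μ) = ⊤
    · rw [htop]; exact le_top
    · have hgint : Integrable (fun ω => 1 / p ω) μ := by
        refine ⟨(measurable_const.div hp).aestronglyMeasurable, ?_⟩
        rw [hasFiniteIntegral_iff_ofReal hnn]
        exact lt_top_iff_ne_top.2 htop
      have h := hcheb τ hgint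
      have hdiv : G τ / F τ ≤ ∫ ω, 1 / p ω ∂μ := by
        rw [div_le_iff₀ (hFpos τ hτ), mul_comm]
        exact h
      calc ENNReal.ofReal (G τ / F τ) ≤ ENNReal.ofReal (∫ ω, 1 / p ω ∂μ) :=
            ENNReal.ofReal_le_ofReal hdiv
        _ = ∫⁻ ω, ENNReal.ofReal (1 / p ω) ∂μ :=
            ofReal_integral_eq_lintegral_ofReal hgint hnn
  · -- the limit
    have haτ : Tendsto (fun τ : ℕ => ∫ ω, (1 - p ω) ^ τ ∂μ) atTop (𝓝 0) := by
      have h0 : (0:ℝ) = ∫ ω, (0:ℝ) ∂μ := by simp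
      rw [h0]
      refine tendsto_integral_of_dominated_convergence (fun _ => (1:ℝ))
        (fun τ => (mpow τ).aestronglyMeasurable) (integrable_const 1)
        (fun τ => ?_) ?_
      · filter_upwards [hp01] with ω hω
        obtain ⟨h0', h1⟩ := hω
        rw [Real.norm_eq_abs, abs_of_nonneg (pow_nonneg (by linarith) τ)]
        exact pow_le_one₀ (by linarith) (by linarith)
      · filter_upwards [hp01] with ω hω
        obtain ⟨h0', h1⟩ := hω
        exact tendsto_pow_atTop_nhds_zero_of_lt_one (by linarith) (by linarith)
    have hFlimR : Tendsto (fun τ : ℕ => F τ) atTop (𝓝 1) := by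
      have h := (tendsto_const_nhds (x := (1:ℝ))).sub haτ
      rw [sub_zero] at h
      exact h.congr fun τ => (hF τ).symm
    have hFlim : Tendsto (fun τ : ℕ => ENNReal.ofReal (F τ)) atTop (𝓝 1) := by
      have := (ENNReal.continuous_ofReal.tendsto 1).comp hFlimR
      simpa [Function.comp_def] using this
    have heq : ∀ τ : ℕ, ENNReal.ofReal (G τ)
        = ∫⁻ ω, ENNReal.ofReal ((1 - (1 - p ω) ^ τ) / p ω) ∂μ := by
      intro τ
      rw [hG τ]
      refine ofReal_integral_eq_lintegral_ofReal (intfg τ) ?_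
      filter_upwards [hp01] with ω hω
      exact (hfg_bounds τ ω hω.1 hω.2).1
    have hGlim' : Tendsto (fun τ : ℕ => ∫⁻ ω, ENNReal.ofReal ((1 - (1 - p ω) ^ τ) / p ω) ∂μ)
        atTop (𝓝 (∫⁻ ω, ENNReal.ofReal (1 / p ω) ∂μ)) := by
      refine lintegral_tendsto_of_tendsto_of_monotone
        (fun τ => (ENNReal.measurable_ofReal.comp (mfg τ)).aemeasurable) ?_ ?_
      · filter_upwards [hp01] with ω hω
        obtain ⟨h0, h1⟩ := hω
        intro m n hmn
        apply ENNReal.ofReal_le_ofReal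
        have hpow : (1 - p ω) ^ n ≤ (1 - p ω) ^ m :=
          pow_le_pow_of_le_one (by linarith) (by linarith) hmn
        gcongr
      · filter_upwards [hp01] with ω hω
        obtain ⟨h0, h1⟩ := hω
        have hpow : Tendsto (fun n : ℕ => (1 - p ω) ^ n) atTop (𝓝 0) :=
          tendsto_pow_atTop_nhds_zero_of_lt_one (by linarith) (by linarith)
        have h : Tendsto (fun n : ℕ => (1 - (1 - p ω) ^ n) / p ω) atTop (𝓝 (1 / p ω)) := by
          have := ((tendsto_const_nhds (x := (1:ℝ))).sub hpow).div_const (p ω)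
          simpa using this
        exact (ENNReal.continuous_ofReal.tendsto _).comp h
    have hGlim : Tendsto (fun τ : ℕ => ENNReal.ofReal (G τ)) atTop
        (𝓝 (∫⁻ ω, ENNReal.ofReal (1 / p ω) ∂μ)) :=
      hGlim'.congr fun τ => (heq τ).symm
    have hdivlim := ENNReal.Tendsto.div hGlim (Or.inr one_ne_zero) hFlim
      (Or.inl ENNReal.one_ne_top)
    rw [div_one] at hdivlim
    refine Filter.Tendsto.congr' ?_ hdivlim
    filter_upwards [eventually_ge_atTop 1] with τ hτ
    exact (ENNReal.ofReal_div_of_pos (hFpos τ hτ)).symm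
end

section
/- If p ∈ (0,1] has a density P(p) on (0,1) satisfying P(p) = c·p^{α-1}(1 + o(1)) as p → 0+ with c, α > 0, then k^α · (1 - pass@k) → c·Γ(α) as k → ∞, where 1 - pass@k = E[(1-p)^k] = ∫_0^1 (1-p)^k P(p) dp. -/
open MeasureTheory Set Filter

lemma beta_limit_aux {α : ℝ} (hα : 0 < α) :
    Tendsto (fun k : ℕ => (k : ℝ) ^ α * ∫ x in Ioo (0:ℝ) 1, x ^ (α - 1) * (1 - x) ^ k)
      atTop (nhds (Real.Gamma α)) := by
  have h0 : Tendsto (fun k : ℕ => (Complex.GammaSeq (α:ℂ) k).re) atTop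
      (nhds ((Complex.Gamma (α:ℂ)).re)) :=
    (Complex.continuous_re.tendsto _).comp (Complex.GammaSeq_tendsto_Gamma (α:ℂ))
  rw [Complex.Gamma_ofReal, Complex.ofReal_re] at h0
  refine h0.congr' ?_
  filter_upwards [eventually_ge_atTop 1] with k hk
  have hre : (0:ℝ) < (α:ℂ).re := by simpa using hα
  have hb : Complex.betaIntegral (α:ℂ) (k + 1) =
      ((∫ x in Ioo (0:ℝ) 1, x ^ (α - 1) * (1 - x) ^ k : ℝ) : ℂ) := by
    rw [Complex.betaIntegral, intervalIntegral.integral_of_le zero_le_one,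
      MeasureTheory.integral_Ioc_eq_integral_Ioo]
    refine (setIntegral_congr_fun measurableSet_Ioo fun x hx => ?_).trans integral_ofReal
    have h1 : ((x:ℂ)) ^ ((α:ℂ) - 1) = ((x ^ (α - 1) : ℝ) : ℂ) := by
      rw [show ((α:ℂ) - 1) = ((α - 1 : ℝ) : ℂ) by push_cast; ring,
        ← Complex.ofReal_cpow hx.1.le]
    have h2 : ((1:ℂ) - (x:ℂ)) ^ ((k:ℂ) + 1 - 1) = (((1 - x) ^ k : ℝ) : ℂ) := by
      rw [add_sub_cancel_right, Complex.cpow_natCast]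
      push_cast
      ring
    rw [h1, h2, ← Complex.ofReal_mul]
    norm_num
  rw [Complex.GammaSeq_eq_betaIntegral_of_re_pos hre, hb]
  have hk' : ((k:ℂ)) ^ (α:ℂ) = (((k:ℝ) ^ α : ℝ) : ℂ) := by
    rw [← Complex.ofReal_natCast, ← Complex.ofReal_cpow (Nat.cast_nonneg k)]
  rw [hk', ← Complex.ofReal_mul, Complex.ofReal_re]

/-- If `p` has a density `P` on `(0,1)` with `P p = c * p^(α-1) * (1 + o(1))` as
`p → 0⁺` (`c, α > 0`), then `k^α * (1 - pass@k) → c * Γ(α)` as `k → ∞`, where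
`1 - pass@k = ∫_0^1 (1-p)^k P(p) dp`. -/
theorem pass_at_k_power_law
    (P : ℝ → ℝ) (c α : ℝ) (hc : 0 < c) (hα : 0 < α)
    (hP_nonneg : ∀ p ∈ Ioo (0:ℝ) 1, 0 ≤ P p)
    (hP_int : IntegrableOn P (Ioo (0:ℝ) 1))
    (hP_prob : ∫ p in Ioo (0:ℝ) 1, P p = 1)
    (hP_asymp : Tendsto (fun p : ℝ => P p / (c * p ^ (α - 1))) (nhdsWithin 0 (Ioi 0))
      (nhds 1)) :
    Tendsto (fun k : ℕ => (k : ℝ) ^ α * ∫ p in Ioo (0:ℝ) 1, (1 - p) ^ k * P p)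
      atTop (nhds (c * Real.Gamma α)) := by
  -- basic integrability facts
  have hpow : IntegrableOn (fun p : ℝ => p ^ (α - 1)) (Ioo (0:ℝ) 1) := by
    have h := intervalIntegral.intervalIntegrable_rpow' (r := α - 1) (by linarith) (a := 0) (b := 1)
    rw [intervalIntegrable_iff_integrableOn_Ioc_of_le zero_le_one] at h
    exact h.mono_set Ioo_subset_Ioc_self
  have hbdd : ∀ (k : ℕ) (f : ℝ → ℝ), IntegrableOn f (Ioo (0:ℝ) 1) →
      IntegrableOn (fun p => (1 - p) ^ k * f p) (Ioo (0:ℝ) 1) := by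
    intro k f hf
    refine Integrable.bdd_mul (c := 1) hf
      ((measurable_const.sub measurable_id).pow_const k).aestronglyMeasurable ?_
    filter_upwards [ae_restrict_mem measurableSet_Ioo] with x hx
    rw [Real.norm_eq_abs, abs_pow]
    exact pow_le_one₀ (abs_nonneg _) (by rw [abs_of_nonneg (by linarith [hx.2])]; linarith [hx.1])
  have hI1 : ∀ k : ℕ, IntegrableOn (fun p => (1 - p) ^ k * P p) (Ioo (0:ℝ) 1) :=
    fun k => hbdd k P hP_int
  have hI2 : ∀ k : ℕ, IntegrableOn (fun p => (1 - p) ^ k * p ^ (α - 1)) (Ioo (0:ℝ) 1) :=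
    fun k => hbdd k _ hpow
  have hΓ : 0 < Real.Gamma α := Real.Gamma_pos_of_pos hα
  -- the beta-integral limit
  have haux : Tendsto (fun k : ℕ => (k : ℝ) ^ α * ∫ x in Ioo (0:ℝ) 1, (1 - x) ^ k * x ^ (α - 1))
      atTop (nhds (Real.Gamma α)) := by
    have := beta_limit_aux hα
    refine this.congr fun k => ?_
    congr 1
    exact setIntegral_congr_fun measurableSet_Ioo fun x _ => mul_comm _ _
  -- reduce to the difference tending to zero
  have key : Tendsto (fun k : ℕ => (k : ℝ) ^ α * (∫ p in Ioo (0:ℝ) 1, (1 - p) ^ k * P p)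
      - c * ((k : ℝ) ^ α * ∫ x in Ioo (0:ℝ) 1, (1 - x) ^ k * x ^ (α - 1)))
      atTop (nhds 0) := by
    rw [NormedAddCommGroup.tendsto_nhds_zero]
    intro ε hε
    set ε' : ℝ := ε / (c * Real.Gamma α + 1) with hε'def
    have hcg : 0 < c * Real.Gamma α + 1 := by positivity
    have hε' : 0 < ε' := div_pos hε hcg
    -- get δ from the asymptotic hypothesis
    have hball : {p : ℝ | dist (P p / (c * p ^ (α - 1))) 1 < ε'} ∈ nhdsWithin 0 (Ioi 0) :=
      hP_asymp (Metric.ball_mem_nhds 1 hε')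
    rw [mem_nhdsGT_iff_exists_Ioo_subset] at hball
    obtain ⟨δ₀, hδ₀, hsub⟩ := hball
    set δ : ℝ := min δ₀ 2⁻¹ with hδdef
    have hδpos : 0 < δ := lt_min hδ₀ (by norm_num)
    have hδlt1 : δ < 1 := lt_of_le_of_lt (min_le_right _ _) (by norm_num)
    have hδabs : |1 - δ| < 1 := by rw [abs_of_nonneg (by linarith)]; linarith
    -- pointwise bound
    have hpt : ∀ (k : ℕ) (p : ℝ), p ∈ Ioo (0:ℝ) 1 →
        |(1 - p) ^ k * (P p - c * p ^ (α - 1))|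
          ≤ ε' * c * ((1 - p) ^ k * p ^ (α - 1))
            + (1 - δ) ^ k * (P p + c * p ^ (α - 1)) := by
      intro k p hp
      have hp0 : 0 < p := hp.1
      have hp1 : p < 1 := hp.2
      have hcp : 0 < c * p ^ (α - 1) := by positivity
      have h1p : 0 ≤ 1 - p := by linarith
      have h1pk : 0 ≤ (1 - p) ^ k := pow_nonneg h1p k
      have hPp : 0 ≤ P p := hP_nonneg p hp
      rw [abs_mul, abs_of_nonneg h1pk]
      rcases lt_or_ge p δ with hlt | hge
      · have hmem : p ∈ Ioo (0:ℝ) δ₀ := ⟨hp0, lt_of_lt_of_le hlt (min_le_left _ _)⟩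
        have := hsub hmem
        simp only [mem_setOf_eq, Real.dist_eq] at this
        have habs : |P p - c * p ^ (α - 1)| ≤ ε' * (c * p ^ (α - 1)) := by
          have heq : P p / (c * p ^ (α - 1)) - 1
              = (P p - c * p ^ (α - 1)) / (c * p ^ (α - 1)) := by
            field_simp
          rw [heq, abs_div, abs_of_pos hcp, div_lt_iff₀ hcp] at this
          exact this.le
        have hnn : 0 ≤ (1 - δ) ^ k * (P p + c * p ^ (α - 1)) := by
          apply mul_nonneg (pow_nonneg (by linarith) k); linarith
        calc (1 - p) ^ k * |P p - c * p ^ (α - 1)|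
            ≤ (1 - p) ^ k * (ε' * (c * p ^ (α - 1))) :=
              mul_le_mul_of_nonneg_left habs h1pk
          _ = ε' * c * ((1 - p) ^ k * p ^ (α - 1)) := by ring
          _ ≤ _ := by linarith
      · have h1 : (1 - p) ^ k ≤ (1 - δ) ^ k :=
          pow_le_pow_left₀ h1p (by linarith) k
        have h2 : |P p - c * p ^ (α - 1)| ≤ P p + c * p ^ (α - 1) := by
          rw [abs_sub_le_iff]; constructor <;> nlinarith
        have hnn : 0 ≤ ε' * c * ((1 - p) ^ k * p ^ (α - 1)) := by positivity
        calc (1 - p) ^ k * |P p - c * p ^ (α - 1)|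
            ≤ (1 - δ) ^ k * (P p + c * p ^ (α - 1)) := by
              apply mul_le_mul h1 h2 (abs_nonneg _) (pow_nonneg (by linarith) k)
          _ ≤ _ := by linarith
    -- constant M
    set M : ℝ := ∫ p in Ioo (0:ℝ) 1, (P p + c * p ^ (α - 1)) with hMdef
    have hMint : IntegrableOn (fun p => P p + c * p ^ (α - 1)) (Ioo (0:ℝ) 1) :=
      hP_int.add (hpow.const_mul c)
    -- the integral bound for each k
    have hbound : ∀ k : ℕ,
        ‖(k : ℝ) ^ α * (∫ p in Ioo (0:ℝ) 1, (1 - p) ^ k * P p)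
          - c * ((k : ℝ) ^ α * ∫ x in Ioo (0:ℝ) 1, (1 - x) ^ k * x ^ (α - 1))‖
        ≤ ε' * c * ((k : ℝ) ^ α * ∫ x in Ioo (0:ℝ) 1, (1 - x) ^ k * x ^ (α - 1))
          + ((k : ℝ) ^ α * (1 - δ) ^ k) * M := by
      intro k
      have hkα : (0:ℝ) ≤ (k : ℝ) ^ α := Real.rpow_nonneg (Nat.cast_nonneg k) α
      have hdiff : (∫ p in Ioo (0:ℝ) 1, (1 - p) ^ k * P p)
          - c * ∫ x in Ioo (0:ℝ) 1, (1 - x) ^ k * x ^ (α - 1)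
          = ∫ p in Ioo (0:ℝ) 1, (1 - p) ^ k * (P p - c * p ^ (α - 1)) := by
        rw [← integral_const_mul, ← integral_sub (hI1 k) ((hI2 k).const_mul c)]
        refine setIntegral_congr_fun measurableSet_Ioo fun x _ => ?_
        ring
      have hstep1 : ‖∫ p in Ioo (0:ℝ) 1, (1 - p) ^ k * (P p - c * p ^ (α - 1))‖
          ≤ ∫ p in Ioo (0:ℝ) 1, |(1 - p) ^ k * (P p - c * p ^ (α - 1))| :=
        norm_integral_le_integral_norm _
      have hint_abs : IntegrableOn (fun p => |(1 - p) ^ k * (P p - c * p ^ (α - 1))|)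
          (Ioo (0:ℝ) 1) := ((hI1 k).sub ((hI2 k).const_mul c)).norm.congr
          (ae_of_all _ fun x => by simp only [Pi.sub_apply, Real.norm_eq_abs]; congr 1; ring)
      have hint_rhs : IntegrableOn
          (fun p => ε' * c * ((1 - p) ^ k * p ^ (α - 1)) + (1 - δ) ^ k * (P p + c * p ^ (α - 1)))
          (Ioo (0:ℝ) 1) := ((hI2 k).const_mul _).add (hMint.const_mul _)
      have hstep2 : (∫ p in Ioo (0:ℝ) 1, |(1 - p) ^ k * (P p - c * p ^ (α - 1))|)
          ≤ ∫ p in Ioo (0:ℝ) 1,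
              (ε' * c * ((1 - p) ^ k * p ^ (α - 1)) + (1 - δ) ^ k * (P p + c * p ^ (α - 1))) :=
        setIntegral_mono_on hint_abs hint_rhs measurableSet_Ioo (hpt k)
      have hsplit : (∫ p in Ioo (0:ℝ) 1,
              (ε' * c * ((1 - p) ^ k * p ^ (α - 1)) + (1 - δ) ^ k * (P p + c * p ^ (α - 1))))
          = ε' * c * (∫ x in Ioo (0:ℝ) 1, (1 - x) ^ k * x ^ (α - 1)) + (1 - δ) ^ k * M := by
        rw [integral_add (((hI2 k)).const_mul _) (hMint.const_mul _),
          integral_const_mul, integral_const_mul]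
      calc ‖(k : ℝ) ^ α * (∫ p in Ioo (0:ℝ) 1, (1 - p) ^ k * P p)
          - c * ((k : ℝ) ^ α * ∫ x in Ioo (0:ℝ) 1, (1 - x) ^ k * x ^ (α - 1))‖
          = (k : ℝ) ^ α * ‖∫ p in Ioo (0:ℝ) 1, (1 - p) ^ k * (P p - c * p ^ (α - 1))‖ := by
            have hring : (k : ℝ) ^ α * (∫ p in Ioo (0:ℝ) 1, (1 - p) ^ k * P p)
              - c * ((k : ℝ) ^ α * ∫ x in Ioo (0:ℝ) 1, (1 - x) ^ k * x ^ (α - 1))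
              = (k : ℝ) ^ α * ((∫ p in Ioo (0:ℝ) 1, (1 - p) ^ k * P p)
                - c * ∫ x in Ioo (0:ℝ) 1, (1 - x) ^ k * x ^ (α - 1)) := by ring
            rw [hring, hdiff, norm_mul, Real.norm_of_nonneg hkα]
        _ ≤ (k : ℝ) ^ α * (ε' * c * (∫ x in Ioo (0:ℝ) 1, (1 - x) ^ k * x ^ (α - 1))
              + (1 - δ) ^ k * M) := by
            apply mul_le_mul_of_nonneg_left _ hkα
            rw [← hsplit]
            exact hstep1.trans hstep2
        _ = ε' * c * ((k : ℝ) ^ α * ∫ x in Ioo (0:ℝ) 1, (1 - x) ^ k * x ^ (α - 1))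
              + ((k : ℝ) ^ α * (1 - δ) ^ k) * M := by ring
    -- the geometric decay
    have hgeo : Tendsto (fun k : ℕ => (k : ℝ) ^ α * (1 - δ) ^ k) atTop (nhds 0) := by
      have hmain := tendsto_pow_const_mul_const_pow_of_abs_lt_one ⌈α⌉₊ hδabs
      refine squeeze_zero' ?_ ?_ hmain
      · filter_upwards [eventually_ge_atTop 1] with k hk
        have : (0:ℝ) ≤ |1 - δ| ^ k := pow_nonneg (abs_nonneg _) k
        have h2 : (0:ℝ) ≤ (1 - δ) ^ k := by
          apply pow_nonneg; linarith
        positivity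
      · filter_upwards [eventually_ge_atTop 1] with k hk
        have hk1 : (1:ℝ) ≤ (k:ℝ) := by exact_mod_cast hk
        have h1 : (k : ℝ) ^ α ≤ (k : ℝ) ^ (⌈α⌉₊ : ℝ) :=
          Real.rpow_le_rpow_of_exponent_le hk1 (Nat.le_ceil α)
        rw [Real.rpow_natCast] at h1
        have h3 : (0:ℝ) ≤ (1 - δ) ^ k := pow_nonneg (by linarith) k
        exact mul_le_mul_of_nonneg_right h1 h3
    -- the RHS tends to ε' * c * Γ α < ε
    have hR : Tendsto (fun k : ℕ =>
        ε' * c * ((k : ℝ) ^ α * ∫ x in Ioo (0:ℝ) 1, (1 - x) ^ k * x ^ (α - 1))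
          + ((k : ℝ) ^ α * (1 - δ) ^ k) * M) atTop
        (nhds (ε' * c * Real.Gamma α + 0 * M)) :=
      ((haux.const_mul _)).add (hgeo.mul_const M)
    have hlim_lt : ε' * c * Real.Gamma α + 0 * M < ε := by
      rw [zero_mul, add_zero, hε'def]
      rw [div_mul_eq_mul_div, div_mul_eq_mul_div, div_lt_iff₀ hcg]
      nlinarith
    filter_upwards [hR.eventually_lt_const hlim_lt] with k hk
    exact lt_of_le_of_lt (hbound k) hk
  -- combine
  have := key.add (haux.const_mul c)
  rw [zero_add] at this
  refine this.congr fun k => ?_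
  ring
end

section
/- Let T be a positive-integer random variable with CDF F satisfying F(1) > 0 and let T_τ be the reset process with interval τ. Then the CDF of T_τ is F_τ(t) = 1 - (1 - F(τ))^n (1 - F(u)) where n = ⌊t/τ⌋ and u = t - nτ. -/
/-- Let `T` be a positive-integer random variable with PMF `f`, CDF `F` (`F 0 = 0`,
`F 1 > 0`), and let `T_τ` be the reset process with interval `τ ≥ 1`, whose PMF `g`
satisfies `g t = f t` for `t ≤ τ` and `g (τ + s) = (1 - F τ) * g s` for `s ≥ 1`.
Then the CDF of `T_τ` is `F_τ t = 1 - (1 - F τ)^n * (1 - F u)` where `n = ⌊t/τ⌋`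
and `u = t - n * τ`. -/
theorem reset_cdf_formula
    (f g : ℕ → ℝ)
    (hf0 : f 0 = 0) (hf_nonneg : ∀ t, 0 ≤ f t) (hf_sum : ∑' t : ℕ, f t = 1)
    (hg0 : g 0 = 0) (hg_nonneg : ∀ t, 0 ≤ g t)
    (F : ℕ → ℝ) (hF : ∀ t, F t = ∑ k ∈ Finset.range (t + 1), f k)
    (hF1 : 0 < F 1)
    (τ : ℕ) (hτ : 1 ≤ τ)
    (hg_le : ∀ t, t ≤ τ → g t = f t)
    (hg_gt : ∀ s, 1 ≤ s → g (τ + s) = (1 - F τ) * g s)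
    (Fτ : ℕ → ℝ) (hFτ : ∀ t, Fτ t = ∑ k ∈ Finset.range (t + 1), g k) :
    ∀ t : ℕ, Fτ t = 1 - (1 - F τ) ^ (t / τ) * (1 - F (t % τ)) := by

  have hF0 : F 0 = 0 := by
    rw [hF]; simpa using hf0
  have hFτeq : Fτ τ = F τ := by
    rw [hFτ, hF]
    exact Finset.sum_congr rfl fun k hk =>
      hg_le k (by have := Finset.mem_range.mp hk; omega)
  intro t
  induction t using Nat.strong_induction_on with
  | _ t ih =>
    rcases lt_trichotomy t τ with h | h | h
    · rw [Nat.div_eq_of_lt h, Nat.mod_eq_of_lt h, pow_zero, one_mul, hFτ, hF]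
      rw [Finset.sum_congr rfl (fun k hk =>
        hg_le k (by have := Finset.mem_range.mp hk; omega))]
      ring
    · subst h
      rw [Nat.div_self (by omega), Nat.mod_self, hFτeq, hF0, pow_one]
      ring
    · obtain ⟨m, hm1, rfl⟩ : ∃ m, 1 ≤ m ∧ t = τ + m := ⟨t - τ, by omega, by omega⟩
      have hsum : Fτ (τ + m) = Fτ τ + (1 - F τ) * Fτ m := by
        rw [hFτ (τ + m), hFτ τ, hFτ m]
        rw [show τ + m + 1 = (τ + 1) + m by omega, Finset.sum_range_add]
        congr 1
        rw [Finset.sum_range_succ', hg0, add_zero, Finset.mul_sum]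
        exact Finset.sum_congr rfl fun j _ => by
          rw [show τ + 1 + j = τ + (j + 1) by omega, hg_gt (j + 1) (by omega)]
      have him := ih m (by omega)
      have hdiv : (τ + m) / τ = m / τ + 1 := Nat.add_div_left m (by omega)
      have hmod : (τ + m) % τ = m % τ := Nat.add_mod_left τ m
      rw [hsum, hFτeq, him, hdiv, hmod, pow_succ]
      ring
end

section
/- For α ∈ (0,1), the quantity 2Γ(α+1)²/Γ(2α+1) − 1 lies strictly in (0,1). -/
open Real intervalIntegral Set

noncomputable def Jbeta (x y : ℝ) : ℝ := ∫ t in (0:ℝ)..1, t ^ (x - 1) * (1 - t) ^ (y - 1)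

lemma Jbeta_symm (x y : ℝ) : Jbeta x y = Jbeta y x := by
  unfold Jbeta
  have := intervalIntegral.integral_comp_sub_left
    (fun t : ℝ => t ^ (y - 1) * (1 - t) ^ (x - 1)) 1 (a := 0) (b := 1)
  simp only [sub_zero, sub_self, sub_sub_cancel] at this
  rw [← this]
  apply intervalIntegral.integral_congr
  intro t _
  ring

lemma Gamma_mul_Gamma_eq (x y : ℝ) (hx : 0 < x) (hy : 0 < y) :
    Real.Gamma x * Real.Gamma y = Real.Gamma (x + y) * Jbeta x y := by
  have hb : Complex.betaIntegral (x : ℂ) (y : ℂ) = (Jbeta x y : ℂ) := by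
    rw [Complex.betaIntegral, Jbeta]
    rw [show ((∫ t in (0:ℝ)..1, t ^ (x - 1) * (1 - t) ^ (y - 1) : ℝ) : ℂ) = ∫ t in (0:ℝ)..1, ((t ^ (x - 1) * (1 - t) ^ (y - 1) : ℝ) : ℂ) from (RCLike.intervalIntegral_ofReal (𝕜 := ℂ)).symm]
    apply intervalIntegral.integral_congr
    intro t ht
    rw [Set.uIcc_of_le (by norm_num : (0:ℝ) ≤ 1)] at ht
    simp only []
    rw [Complex.ofReal_mul, Complex.ofReal_cpow ht.1,
      Complex.ofReal_cpow (by linarith [ht.2] : (0:ℝ) ≤ 1 - t)]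
    push_cast
    ring
  have := Complex.Gamma_mul_Gamma_eq_betaIntegral
    (s := (x:ℂ)) (t := (y:ℂ)) (by simpa using hx) (by simpa using hy)
  rw [Complex.Gamma_ofReal, Complex.Gamma_ofReal, hb, ← Complex.ofReal_add,
    Complex.Gamma_ofReal] at this
  exact_mod_cast this

lemma cont_pow {c d : ℝ} (hc : 0 ≤ c) (hd : 0 ≤ d) :
    Continuous (fun t : ℝ => t ^ c * (1 - t) ^ d) :=
  (Real.continuous_rpow_const hc).mul
    ((Real.continuous_rpow_const hd).comp (continuous_const.sub continuous_id))

lemma Gamma_sq_midpoint_lt (x y : ℝ) (hx : 1 ≤ x) (hxy : x < y) :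
    Real.Gamma ((x + y) / 2) ^ 2 < Real.Gamma x * Real.Gamma y := by
  set m := (x + y) / 2 with hm
  have hx0 : (0:ℝ) < x := lt_of_lt_of_le one_pos hx
  have hy0 : (0:ℝ) < y := hx0.trans hxy
  have hm1 : 1 < m := by rw [hm]; linarith
  have hsum : Real.Gamma (m + m) = Real.Gamma (x + y) := by rw [hm]; ring_nf
  have hGm := Gamma_mul_Gamma_eq m m (by linarith) (by linarith)
  have hGxy := Gamma_mul_Gamma_eq x y hx0 hy0
  have hGpos : 0 < Real.Gamma (x + y) := Real.Gamma_pos_of_pos (by linarith)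
  -- suffices to compare beta integrals
  have key : Jbeta m m < Jbeta x y := by
    set p : ℝ → ℝ := fun t => t ^ (x - 1) * (1 - t) ^ (y - 1) with hp
    set q : ℝ → ℝ := fun t => t ^ (y - 1) * (1 - t) ^ (x - 1) with hq
    have hsq : ∀ t : ℝ, t ∈ Icc (0:ℝ) 1 →
        (t ^ (m - 1) * (1 - t) ^ (m - 1)) ^ 2 = p t * q t := by
      intro t ht
      have h1 : (t ^ (m - 1)) ^ 2 = t ^ (x - 1) * t ^ (y - 1) := by
        rw [← Real.rpow_natCast (t ^ (m-1)) 2, ← Real.rpow_mul ht.1,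
          ← Real.rpow_add' ht.1 (by simp [hm]; linarith)]
        norm_num
        rw [hm]; ring_nf
      have h2 : ((1 - t) ^ (m - 1)) ^ 2 = (1 - t) ^ (x - 1) * (1 - t) ^ (y - 1) := by
        have h1t : (0:ℝ) ≤ 1 - t := by linarith [ht.2]
        rw [← Real.rpow_natCast ((1-t) ^ (m-1)) 2, ← Real.rpow_mul h1t,
          ← Real.rpow_add' h1t (by simp [hm]; linarith)]
        norm_num
        rw [hm]; ring_nf
      calc (t ^ (m - 1) * (1 - t) ^ (m - 1)) ^ 2
          = (t ^ (m-1))^2 * ((1-t) ^ (m-1))^2 := by ring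
        _ = (t ^ (x - 1) * t ^ (y - 1)) * ((1 - t) ^ (x - 1) * (1 - t) ^ (y - 1)) := by
            rw [h1, h2]
        _ = p t * q t := by rw [hp, hq]; ring
    have hmain : Jbeta m m < ∫ t in (0:ℝ)..1, (p t + q t) / 2 := by
      rw [Jbeta]
      apply intervalIntegral.integral_lt_integral_of_continuousOn_of_le_of_exists_lt one_pos
      · exact (cont_pow (by linarith) (by linarith)).continuousOn
      · exact (((cont_pow (by linarith) (by linarith)).add
          (cont_pow (by linarith) (by linarith))).div_const 2).continuousOn
      · intro t ht
        have ht' : t ∈ Icc (0:ℝ) 1 := ⟨le_of_lt ht.1, ht.2⟩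
        have hf0 : 0 ≤ t ^ (m - 1) * (1 - t) ^ (m - 1) := by
          apply mul_nonneg <;> apply Real.rpow_nonneg
          · exact ht'.1
          · linarith [ht'.2]
        have hsq' := hsq t ht'
        have hp0 : 0 ≤ p t := by
          apply mul_nonneg <;> apply Real.rpow_nonneg
          · exact ht'.1
          · linarith [ht'.2]
        have hq0 : 0 ≤ q t := by
          apply mul_nonneg <;> apply Real.rpow_nonneg
          · exact ht'.1
          · linarith [ht'.2]
        nlinarith [sq_nonneg (p t - q t), sq_nonneg (t ^ (m - 1) * (1 - t) ^ (m - 1) - (p t + q t)/2)]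
      · refine ⟨1/4, by norm_num, ?_⟩
        have ht' : (1/4 : ℝ) ∈ Icc (0:ℝ) 1 := by norm_num
        have hsq' := hsq (1/4) ht'
        have hpq : q (1/4) < p (1/4) := by
          rw [hp, hq]
          simp only
          have e1 : ((1:ℝ) - 1/4) = 3/4 := by norm_num
          rw [e1]
          have h4 : ((1:ℝ)/4) ^ (y-1) = (1/4:ℝ) ^ (x-1) * (1/4:ℝ) ^ (y-x) := by
            rw [← Real.rpow_add (by norm_num)]; ring_nf
          have h34 : ((3:ℝ)/4) ^ (y-1) = (3/4:ℝ) ^ (x-1) * (3/4:ℝ) ^ (y-x) := by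
            rw [← Real.rpow_add (by norm_num)]; ring_nf
          rw [h4, h34]
          have hlt : ((1:ℝ)/4) ^ (y-x) < (3/4:ℝ) ^ (y-x) :=
            Real.rpow_lt_rpow (by norm_num) (by norm_num) (by linarith)
          have p1 : (0:ℝ) < (1/4:ℝ) ^ (x-1) := Real.rpow_pos_of_pos (by norm_num) _
          have p2 : (0:ℝ) < (3/4:ℝ) ^ (x-1) := Real.rpow_pos_of_pos (by norm_num) _
          calc (1/4:ℝ) ^ (x-1) * (1/4:ℝ) ^ (y-x) * ((3/4:ℝ) ^ (x-1))
              < (1/4:ℝ) ^ (x-1) * (3/4:ℝ) ^ (y-x) * ((3/4:ℝ) ^ (x-1)) := by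
                apply mul_lt_mul_of_pos_right _ p2
                exact mul_lt_mul_of_pos_left hlt p1
            _ = (1/4:ℝ) ^ (x-1) * ((3/4:ℝ) ^ (x-1) * (3/4:ℝ) ^ (y-x)) := by ring
        have hq0 : 0 < q (1/4) := by
          rw [hq]; simp only
          apply mul_pos <;> [skip; skip] <;> apply Real.rpow_pos_of_pos <;> norm_num
        have hf0 : 0 ≤ (1/4:ℝ) ^ (m - 1) * (1 - 1/4:ℝ) ^ (m - 1) := by
          apply mul_nonneg <;> apply Real.rpow_nonneg <;> norm_num
        nlinarith [sq_nonneg (p (1/4) - q (1/4)),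
          sq_nonneg ((1/4:ℝ) ^ (m - 1) * (1 - 1/4:ℝ) ^ (m - 1) - (p (1/4) + q (1/4))/2)]
    have heq : (∫ t in (0:ℝ)..1, (p t + q t) / 2) = Jbeta x y := by
      have hint_p : IntervalIntegrable p MeasureTheory.volume 0 1 :=
        (cont_pow (by linarith) (by linarith)).intervalIntegrable 0 1
      have hint_q : IntervalIntegrable q MeasureTheory.volume 0 1 :=
        (cont_pow (by linarith) (by linarith)).intervalIntegrable 0 1
      have : (∫ t in (0:ℝ)..1, (p t + q t) / 2)
          = ((∫ t in (0:ℝ)..1, p t) + ∫ t in (0:ℝ)..1, q t) / 2 := by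
        rw [← intervalIntegral.integral_add hint_p hint_q, ← intervalIntegral.integral_div]
      rw [this]
      have hqx : (∫ t in (0:ℝ)..1, q t) = Jbeta y x := rfl
      have hpx : (∫ t in (0:ℝ)..1, p t) = Jbeta x y := rfl
      rw [hqx, hpx, Jbeta_symm y x]
      ring
    rw [heq] at hmain
    exact hmain
  calc Real.Gamma m ^ 2 = Real.Gamma m * Real.Gamma m := sq (Real.Gamma m) ▸ by ring
    _ = Real.Gamma (m + m) * Jbeta m m := hGm
    _ = Real.Gamma (x + y) * Jbeta m m := by rw [hsum]
    _ < Real.Gamma (x + y) * Jbeta x y := by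
        exact mul_lt_mul_of_pos_left key hGpos
    _ = Real.Gamma x * Real.Gamma y := hGxy.symm

lemma Gamma_mul_spread_le {a b u v : ℝ} (ha : 1 ≤ a) (hau : a ≤ u) (hav : a ≤ v)
    (hsum : u + v = a + b) :
    Real.Gamma u * Real.Gamma v ≤ Real.Gamma a * Real.Gamma b := by
  have ha0 : (0:ℝ) < a := lt_of_lt_of_le one_pos ha
  have hu0 : (0:ℝ) < u := lt_of_lt_of_le ha0 hau
  have hv0 : (0:ℝ) < v := lt_of_lt_of_le ha0 hav
  have hab : a ≤ b := by linarith
  have hb0 : (0:ℝ) < b := lt_of_lt_of_le ha0 hab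
  rcases eq_or_lt_of_le hab with hEq | hlt
  · have hua : u = a := by linarith [hau, hav]
    have hva : v = b := by linarith
    rw [hua, hva]
  · set s : ℝ := (b - u) / (b - a) with hs
    have hba : 0 < b - a := by linarith
    have hs0 : 0 ≤ s := div_nonneg (by linarith) hba.le
    have hs1 : s ≤ 1 := by
      rw [hs, div_le_one hba]; linarith
    have hcomb : u = s * a + (1 - s) * b := by
      have := div_mul_cancel₀ (b - u) hba.ne'; rw [← hs] at this; linear_combination this
    have hcomb' : v = (1 - s) * a + s * b := by
      field_simp [hs]; ring_nf; nlinarith [hsum]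
    have hconv := Real.convexOn_log_Gamma
    have h1 := hconv.2 (Set.mem_Ioi.mpr ha0) (Set.mem_Ioi.mpr hb0) hs0 (by linarith)
      (by ring : s + (1 - s) = 1)
    have h2 := hconv.2 (Set.mem_Ioi.mpr ha0) (Set.mem_Ioi.mpr hb0) (by linarith : (0:ℝ) ≤ 1 - s)
      hs0 (by ring : (1 - s) + s = 1)
    simp only [Function.comp, smul_eq_mul] at h1 h2
    rw [← hcomb] at h1
    rw [← hcomb'] at h2
    have hlog : Real.log (Real.Gamma u) + Real.log (Real.Gamma v) ≤
        Real.log (Real.Gamma a) + Real.log (Real.Gamma b) := by linarith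
    have hGu := Real.Gamma_pos_of_pos hu0
    have hGv := Real.Gamma_pos_of_pos hv0
    have hGa := Real.Gamma_pos_of_pos ha0
    have hGb := Real.Gamma_pos_of_pos hb0
    rw [← Real.log_mul hGu.ne' hGv.ne', ← Real.log_mul hGa.ne' hGb.ne'] at hlog
    exact (Real.log_le_log_iff (by positivity) (by positivity)).mp hlog

/-- For `α ∈ (0,1)`, the quantity `2Γ(α+1)²/Γ(2α+1) − 1` lies strictly in `(0,1)`. -/
theorem gamma_cv_constant_mem_Ioo (α : ℝ) (hα : α ∈ Set.Ioo (0:ℝ) 1) :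
    2 * Real.Gamma (α + 1) ^ 2 / Real.Gamma (2 * α + 1) - 1 ∈ Set.Ioo (0:ℝ) 1 := by
  obtain ⟨h0, h1⟩ := hα
  have hG1 : 0 < Real.Gamma (α + 1) := Real.Gamma_pos_of_pos (by linarith)
  have hG2 : 0 < Real.Gamma (2 * α + 1) := Real.Gamma_pos_of_pos (by linarith)
  -- upper: Γ(α+1)² < Γ(2α+1)
  have hupper : Real.Gamma (α + 1) ^ 2 < Real.Gamma (2 * α + 1) := by
    have := Gamma_sq_midpoint_lt 1 (2 * α + 1) le_rfl (by linarith)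
    rw [show ((1:ℝ) + (2 * α + 1)) / 2 = α + 1 by ring, Real.Gamma_one, one_mul] at this
    exact this
  -- lower: Γ(2α+1) < 2 Γ(α+1)²
  have hlower : Real.Gamma (2 * α + 1) < 2 * Real.Gamma (α + 1) ^ 2 := by
    have hA : 1 < Real.Gamma (α + 1) * Real.Gamma (3 - α) := by
      have := Gamma_sq_midpoint_lt (α + 1) (3 - α) (by linarith) (by linarith)
      rw [show ((α + 1) + (3 - α)) / 2 = 2 by ring, Real.Gamma_two] at this
      simpa using this
    have hB : Real.Gamma (3 - α) * Real.Gamma (2 * α + 1) ≤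
        Real.Gamma (α + 1) * Real.Gamma 3 := by
      apply Gamma_mul_spread_le (by linarith) (by linarith) (by linarith)
      ring
    have hG3 : Real.Gamma 3 = 2 := by
      rw [show (3:ℝ) = 2 + 1 by norm_num, Real.Gamma_add_one (by norm_num), Real.Gamma_two]
      norm_num
    rw [hG3] at hB
    have hG3a : 0 < Real.Gamma (3 - α) := Real.Gamma_pos_of_pos (by linarith)
    calc Real.Gamma (2 * α + 1) = 1 * Real.Gamma (2 * α + 1) := (one_mul _).symm
      _ < (Real.Gamma (α + 1) * Real.Gamma (3 - α)) * Real.Gamma (2 * α + 1) :=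
          mul_lt_mul_of_pos_right hA hG2
      _ = Real.Gamma (α + 1) * (Real.Gamma (3 - α) * Real.Gamma (2 * α + 1)) := by ring
      _ ≤ Real.Gamma (α + 1) * (Real.Gamma (α + 1) * 2) :=
          mul_le_mul_of_nonneg_left hB hG1.le
      _ = 2 * Real.Gamma (α + 1) ^ 2 := by ring
  constructor
  · rw [sub_pos, lt_div_iff₀ hG2, one_mul]
    exact hlower
  · rw [sub_lt_iff_lt_add]
    rw [div_lt_iff₀ hG2]
    nlinarith [hupper]
end

section
/- For p ∈ (0,1) and integer τ ≥ 1, the function p ↦ p(1-p)^τ / (1 - (1-p)^τ) is strictly decreasing on (0,1). -/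
/-- For integer `τ ≥ 1`, the function `p ↦ p (1-p)^τ / (1 - (1-p)^τ)` is strictly
decreasing on `(0,1)`. -/
theorem key_ratio_strictAntiOn (τ : ℕ) (hτ : 1 ≤ τ) :
    StrictAntiOn (fun p : ℝ => p * (1 - p) ^ τ / (1 - (1 - p) ^ τ))
      (Set.Ioo (0:ℝ) 1) := by
  intro a ha b hb hab
  obtain ⟨ha0, ha1⟩ := ha
  obtain ⟨hb0, hb1⟩ := hb
  have hqa0 : 0 < 1 - a := by linarith
  have hqb0 : 0 < 1 - b := by linarith
  have hba : 1 - b < 1 - a := by linarith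
  have key : ∀ q : ℝ, 1 - q ^ τ = (1 - q) * ∑ k ∈ Finset.range τ, q ^ k := by
    intro q
    have h := geom_sum_mul q τ
    linear_combination h
  have hSpos : ∀ q : ℝ, 0 < q → 0 < ∑ k ∈ Finset.range τ, q ^ k := by
    intro q hq
    apply Finset.sum_pos (fun k _ => pow_pos hq k)
    exact Finset.nonempty_range_iff.mpr (by omega)
  have hSa := hSpos _ hqa0
  have hSb := hSpos _ hqb0
  have simp_f : ∀ p : ℝ, 0 < p → p < 1 →
      p * (1 - p) ^ τ / (1 - (1 - p) ^ τ)
        = (1 - p) ^ τ / ∑ k ∈ Finset.range τ, (1 - p) ^ k := by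
    intro p hp _
    rw [key (1 - p)]
    have : (1 : ℝ) - (1 - p) = p := by ring
    rw [this, mul_div_mul_left _ _ (ne_of_gt hp)]
  simp only []
  rw [simp_f a ha0 ha1, simp_f b hb0 hb1]
  rw [div_lt_div_iff₀ hSb hSa]
  rw [Finset.mul_sum, Finset.mul_sum]
  apply Finset.sum_lt_sum_of_nonempty (Finset.nonempty_range_iff.mpr (by omega))
  intro k hk
  have hkτ : k < τ := Finset.mem_range.mp hk
  have hdecomp : τ = k + (τ - k) := by omega
  rw [hdecomp, pow_add, pow_add]
  have hpl : (1 - b) ^ (τ - k) < (1 - a) ^ (τ - k) :=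
    pow_lt_pow_left₀ hba hqb0.le (by omega)
  have h1 : 0 < (1 - b) ^ k := pow_pos hqb0 k
  have h2 : 0 < (1 - a) ^ k := pow_pos hqa0 k
  calc (1 - b) ^ k * (1 - b) ^ (τ - k) * (1 - a) ^ k
      = ((1 - b) ^ k * (1 - a) ^ k) * (1 - b) ^ (τ - k) := by ring
    _ < ((1 - b) ^ k * (1 - a) ^ k) * (1 - a) ^ (τ - k) := by
        exact mul_lt_mul_of_pos_left hpl (mul_pos h1 h2)
    _ = (1 - a) ^ k * (1 - a) ^ (τ - k) * (1 - b) ^ k := by ring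
end
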